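/- Let π be a probability measure on a measurable data space Z, let n ≥ 1, and let ℓ : Θ × Z → ℝ be nonnegative and measurable. For a finite tuple D = (z_1,…,z_m) ∈ Z^m, write S_D(θ) := Σ_{i=1}^m ℓ(θ,z_i) and assume the Gibbs posterior density p_D(θ) := exp(−S_D(θ)/T)/∫ exp(−S_D(θ')/T) dμ(θ') is well defined (finite positive normalizer) for π-almost-every tuple of each relevant length. Consider the random experiment H₁: sample D = (z_1,…,z_n) i.i.d. from π, sample θ with conditional density p_D with respect to μ, sample an index J uniformly from {1,…,n} independently of θ given D, and output (θ, z_J). Then for every bounded measurable g : Θ × Z → ℝ, 𝔼_{H₁}[g(θ, z_J)] = ∫_Z ∫_Θ g(θ,z) · 𝔼_{D'∼π^{n−1}}[p_{D'∪z}(θ)] dμ(θ) dπ(z); that is, the joint law of (θ, z_J) under H₁ has density (with respect to μ ⊗ π) equal to (θ,z) ↦ 𝔼_{D'∼π^{n−1}}[p_{D'∪z}(θ)], where D'∪z denotes the tuple D' of length n−1 with z appended. -/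

import Mathlib

open MeasureTheory

/-!
Relabelling the coordinates of `π^{m+1}` preserves the measure and the Gibbs density depends on
the dataset only through the multiset of its records, so each of the `m + 1` terms of the
average over `J` equals the one in which `z_J` is the last record `z` appended to `D' ∼ π^m`.
Since the Gibbs density integrates to `1` and `g` is bounded, Fubini then moves the expectation
over `D'` inside the integral over `θ`.
-/

/-- The Gibbs posterior density (w.r.t. `μ`) of the model trained on the finite
dataset `D : Fin m → Z` with per-record loss `ℓ` and temperature `T`:
`p_D(θ) = exp(−(Σ_i ℓ(θ, D i))/T) / ∫ exp(−(Σ_i ℓ(θ', D i))/T) dμ(θ')`. -/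
noncomputable def gibbsDensity {Θ Z : Type*} [MeasurableSpace Θ]
    (μ : MeasureTheory.Measure Θ) (T : ℝ) (ℓ : Θ → Z → ℝ)
    {m : ℕ} (D : Fin m → Z) (θ : Θ) : ℝ :=
  Real.exp (-(∑ i, ℓ θ (D i)) / T) /
    ∫ θ', Real.exp (-(∑ i, ℓ θ' (D i)) / T) ∂μ

theorem Fin.sum_comp_insertNth {β M : Type*} [AddCommMonoid M] {n : ℕ} (f : β → M)
    (j : Fin (n + 1)) (x : β) (p : Fin n → β) :
    ∑ i, f ((Fin.insertNth j x p : Fin (n + 1) → β) i) = f x + ∑ i, f (p i) := by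
  simp [Fin.sum_univ_succAbove _ j]

section Exchangeability

variable {Z : Type*} [MeasurableSpace Z] {m : ℕ}

theorem measurable_snoc_prod :
    Measurable fun p : Z × (Fin m → Z) => (Fin.snoc p.2 p.1 : Fin (m + 1) → Z) := by
  have h : Measurable fun p : Z × (Fin m → Z) =>
      (Fin.insertNth (Fin.last m) p.1 p.2 : Fin (m + 1) → Z) :=
    (MeasurableEquiv.piFinSuccAbove (fun _ => Z) (Fin.last m)).symm.measurable
  simpa only [Fin.insertNth_last'] using h

variable (π : Measure Z) [SigmaFinite π]

theorem integral_pi_eq_integral_prod_insertNth {E : Type*} [NormedAddCommGroup E]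
    [NormedSpace ℝ E] (j : Fin (m + 1)) (f : (Fin (m + 1) → Z) → E) :
    ∫ D, f D ∂Measure.pi (fun _ => π)
      = ∫ p, f (Fin.insertNth j p.1 p.2) ∂π.prod (Measure.pi fun _ : Fin m => π) :=
  ((measurePreserving_piFinSuccAbove (fun _ => π) j).symm _).integral_comp' f |>.symm

theorem ae_prod_snoc_of_ae_pi {P : (Fin (m + 1) → Z) → Prop}
    (hP : ∀ᵐ D ∂Measure.pi (fun _ => π), P D) :
    ∀ᵐ p ∂π.prod (Measure.pi fun _ : Fin m => π), P (Fin.snoc p.2 p.1) := by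
  have h : ∀ᵐ p ∂π.prod (Measure.pi fun _ : Fin m => π),
      P (Fin.insertNth (Fin.last m) p.1 p.2) :=
    ((measurePreserving_piFinSuccAbove (fun _ => π) (Fin.last m)).symm _)
      |>.quasiMeasurePreserving.ae hP
  simpa only [Fin.insertNth_last'] using h

end Exchangeability

section Gibbs

variable {Θ Z : Type*} [MeasurableSpace Θ] {k : ℕ} (μ : Measure Θ) (T : ℝ) (ℓ : Θ → Z → ℝ)

def GibbsNormalizable (D : Fin k → Z) : Prop :=
  Integrable (fun θ => Real.exp (-(∑ i, ℓ θ (D i)) / T)) μ ∧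
    0 < ∫ θ, Real.exp (-(∑ i, ℓ θ (D i)) / T) ∂μ

variable {μ T ℓ}

theorem gibbsDensity_nonneg (D : Fin k → Z) (θ : Θ) : 0 ≤ gibbsDensity μ T ℓ D θ :=
  div_nonneg (Real.exp_pos _).le (integral_nonneg fun _ => (Real.exp_pos _).le)

theorem gibbsDensity_insertNth {m : ℕ} (j : Fin (m + 1)) (z : Z) (D' : Fin m → Z) :
    gibbsDensity μ T ℓ (Fin.insertNth j z D') = gibbsDensity μ T ℓ (Fin.snoc D' z) := by
  ext θ
  rw [← Fin.insertNth_last']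
  simp only [gibbsDensity, Fin.sum_comp_insertNth]

theorem GibbsNormalizable.integrable_gibbsDensity {D : Fin k → Z}
    (hD : GibbsNormalizable μ T ℓ D) : Integrable (gibbsDensity μ T ℓ D) μ :=
  hD.1.div_const _

theorem GibbsNormalizable.integral_gibbsDensity {D : Fin k → Z}
    (hD : GibbsNormalizable μ T ℓ D) : ∫ θ, gibbsDensity μ T ℓ D θ ∂μ = 1 := by
  unfold gibbsDensity
  rw [integral_div, div_self hD.2.ne']

theorem norm_mul_gibbsDensity_le {h : Θ → ℝ} {C : ℝ} (hb : ∀ θ, |h θ| ≤ C)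
    (D : Fin k → Z) (θ : Θ) :
    ‖h θ * gibbsDensity μ T ℓ D θ‖ ≤ C * gibbsDensity μ T ℓ D θ := by
  rw [Real.norm_eq_abs, abs_mul, abs_of_nonneg (gibbsDensity_nonneg D θ)]
  exact mul_le_mul_of_nonneg_right (hb θ) (gibbsDensity_nonneg D θ)

theorem GibbsNormalizable.abs_integral_mul_gibbsDensity_le {D : Fin k → Z}
    (hD : GibbsNormalizable μ T ℓ D) {h : Θ → ℝ} {C : ℝ} (hb : ∀ θ, |h θ| ≤ C) :
    |∫ θ, h θ * gibbsDensity μ T ℓ D θ ∂μ| ≤ C := by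
  calc |∫ θ, h θ * gibbsDensity μ T ℓ D θ ∂μ|
      ≤ ∫ θ, C * gibbsDensity μ T ℓ D θ ∂μ :=
        norm_integral_le_of_norm_le (hD.integrable_gibbsDensity.const_mul C)
          (.of_forall (norm_mul_gibbsDensity_le hb D))
    _ = C := by rw [integral_const_mul, hD.integral_gibbsDensity, mul_one]

variable [MeasurableSpace Z]

theorem integral_integral_apply_mul_gibbsDensity (π : Measure Z) [SigmaFinite π]
    (g : Θ → Z → ℝ) (j : Fin (k + 1)) :
    ∫ D, ∫ θ, g θ (D j) * gibbsDensity μ T ℓ D θ ∂μ ∂(Measure.pi fun _ => π)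
      = ∫ p, ∫ θ, g θ p.1 * gibbsDensity μ T ℓ (Fin.snoc p.2 p.1) θ ∂μ
          ∂π.prod (Measure.pi fun _ : Fin k => π) := by
  simp only [integral_pi_eq_integral_prod_insertNth π j, Fin.insertNth_apply_same,
    gibbsDensity_insertNth]

variable [SFinite μ]

theorem Measurable.gibbsDensity_comp (hℓ : Measurable fun p : Θ × Z => ℓ p.1 p.2)
    {α : Type*} [MeasurableSpace α] {D : α → Fin k → Z} (hD : Measurable D) :
    Measurable fun p : α × Θ => gibbsDensity μ T ℓ (D p.1) p.2 := by
  have hexp : Measurable fun p : α × Θ => Real.exp (-(∑ i, ℓ p.2 (D p.1 i)) / T) :=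
    ((Finset.measurable_sum _ fun i _ => hℓ.comp (measurable_snd.prodMk
      ((measurable_pi_apply i).comp (hD.comp measurable_fst)))).neg.div_const T).exp
  exact hexp.div (hexp.stronglyMeasurable.integral_prod_right'.measurable.comp measurable_fst)

end Gibbs

section GibbsAverages

variable {Θ Z α : Type*} [MeasurableSpace Θ] [MeasurableSpace Z] [MeasurableSpace α]
  {μ : Measure Θ} [SFinite μ] {T : ℝ} {ℓ : Θ → Z → ℝ} {k : ℕ}
  (ν : Measure α) [IsFiniteMeasure ν] {D : α → Fin k → Z}

theorem integrable_integral_mul_gibbsDensity (hℓ : Measurable fun p : Θ × Z => ℓ p.1 p.2)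
    (hD : Measurable D) (hwell : ∀ᵐ a ∂ν, GibbsNormalizable μ T ℓ (D a))
    {h : α → Θ → ℝ} (hh : Measurable (Function.uncurry h)) {C : ℝ}
    (hb : ∀ a θ, |h a θ| ≤ C) :
    Integrable (fun a => ∫ θ, h a θ * gibbsDensity μ T ℓ (D a) θ ∂μ) ν := by
  have hmeas : Measurable fun a => ∫ θ, h a θ * gibbsDensity μ T ℓ (D a) θ ∂μ :=
    (hh.mul (hℓ.gibbsDensity_comp hD)).stronglyMeasurable.integral_prod_right'.measurable
  refine (integrable_const C).mono' hmeas.aestronglyMeasurable (hwell.mono fun a ha => ?_)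
  exact ha.abs_integral_mul_gibbsDensity_le (hb a)

theorem integral_integral_mul_gibbsDensity_comm (hℓ : Measurable fun p : Θ × Z => ℓ p.1 p.2)
    (hD : Measurable D) (hwell : ∀ᵐ a ∂ν, GibbsNormalizable μ T ℓ (D a))
    {h : Θ → ℝ} (hh : Measurable h) {C : ℝ} (hb : ∀ θ, |h θ| ≤ C) :
    ∫ a, ∫ θ, h θ * gibbsDensity μ T ℓ (D a) θ ∂μ ∂ν
      = ∫ θ, h θ * ∫ a, gibbsDensity μ T ℓ (D a) θ ∂ν ∂μ := by
  have hp := hℓ.gibbsDensity_comp (μ := μ) (T := T) hD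
  have hp_int :
      Integrable (fun p : α × Θ => gibbsDensity μ T ℓ (D p.1) p.2) (ν.prod μ) := by
    refine (integrable_prod_iff hp.aestronglyMeasurable).2
      ⟨hwell.mono fun a ha => ha.integrable_gibbsDensity, ?_⟩
    refine (integrable_const (1 : ℝ)).congr (hwell.mono fun a ha => ?_)
    simp only [Real.norm_of_nonneg (gibbsDensity_nonneg _ _), ha.integral_gibbsDensity]
  have hf_int : Integrable (fun p : α × Θ => h p.2 * gibbsDensity μ T ℓ (D p.1) p.2)
      (ν.prod μ) :=
    (hp_int.const_mul C).mono' ((hh.comp measurable_snd).mul hp).aestronglyMeasurable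
      (.of_forall fun p => norm_mul_gibbsDensity_le hb _ _)
  simp_rw [← integral_const_mul]
  exact integral_integral_swap hf_int

end GibbsAverages

theorem h1_joint_law_density_general
    {Θ Z : Type*} [MeasurableSpace Θ] [MeasurableSpace Z]
    (μ : Measure Θ) [SigmaFinite μ]
    (π : Measure Z) [IsProbabilityMeasure π]
    (T : ℝ)
    (ℓ : Θ → Z → ℝ) (hℓ : Measurable fun p : Θ × Z => ℓ p.1 p.2)
    (m : ℕ)
    (hwell : ∀ k : ℕ, ∀ᵐ D ∂(Measure.pi fun _ : Fin k => π),
      Integrable (fun θ => Real.exp (-(∑ i, ℓ θ (D i)) / T)) μ ∧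
      0 < ∫ θ, Real.exp (-(∑ i, ℓ θ (D i)) / T) ∂μ)
    (g : Θ → Z → ℝ) (hg : Measurable fun p : Θ × Z => g p.1 p.2)
    (hgb : ∃ C : ℝ, ∀ θ z, |g θ z| ≤ C) :
    ∫ D, (∑ j : Fin (m + 1), ∫ θ, g θ (D j) * gibbsDensity μ T ℓ D θ ∂μ)
          / (m + 1 : ℝ)
        ∂(Measure.pi fun _ : Fin (m + 1) => π)
      = ∫ z, ∫ θ, g θ z *
            (∫ D', gibbsDensity μ T ℓ (Fin.snoc D' z) θ
              ∂(Measure.pi fun _ : Fin m => π)) ∂μ ∂π := by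
  obtain ⟨C, hC⟩ := hgb
  have hwell_snoc := ae_prod_snoc_of_ae_pi π (P := GibbsNormalizable μ T ℓ) (hwell (m + 1))
  have hterm_int (j : Fin (m + 1)) : Integrable
      (fun D => ∫ θ, g θ (D j) * gibbsDensity μ T ℓ D θ ∂μ) (Measure.pi fun _ => π) :=
    integrable_integral_mul_gibbsDensity _ hℓ measurable_id (hwell (m + 1))
      (h := fun D θ => g θ (D j))
      (hg.comp (measurable_snd.prodMk ((measurable_pi_apply j).comp measurable_fst)))
      fun _ θ => hC θ _
  have hlast_int := integrable_integral_mul_gibbsDensity _ hℓ measurable_snoc_prod hwell_snoc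
    (h := fun p θ => g θ p.1) (hg.comp (measurable_snd.prodMk measurable_fst.fst))
    fun _ θ => hC θ _
  calc _ = (∑ _j : Fin (m + 1), ∫ p, ∫ θ, g θ p.1 * gibbsDensity μ T ℓ (Fin.snoc p.2 p.1) θ
            ∂μ ∂π.prod (Measure.pi fun _ : Fin m => π)) / (m + 1 : ℝ) := by
        rw [integral_div, integral_finsetSum _ fun j _ => hterm_int j]
        simp only [integral_integral_apply_mul_gibbsDensity π g]
    _ = ∫ z, ∫ D', ∫ θ, g θ z * gibbsDensity μ T ℓ (Fin.snoc D' z) θ ∂μ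
          ∂(Measure.pi fun _ : Fin m => π) ∂π := by
        rw [Finset.sum_const, Finset.card_univ, Fintype.card_fin, nsmul_eq_mul,
          integral_prod _ hlast_int]
        push_cast
        field_simp
    _ = _ := integral_congr_ae <| (Measure.ae_ae_of_ae_prod hwell_snoc).mono fun z hz =>
        integral_integral_mul_gibbsDensity_comm _ hℓ
          (measurable_snoc_prod.comp measurable_prodMk_left) hz
          (hg.comp (measurable_id.prodMk measurable_const)) fun θ => hC θ z

/-- Exchangeability computation for the "member" hypothesis `H₁` of the
membership-inference LRT (Lemma 1): the joint law of `(θ, z_J)` — where the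
dataset `D` of size `n = m+1` is sampled i.i.d. from `π`, the model `θ` is
sampled from the Gibbs posterior `p_D`, and `J` is a uniformly random index —
has density `(θ, z) ↦ 𝔼_{D'∼π^m}[p_{D'∪z}(θ)]` with respect to `μ ⊗ π`; i.e.
for every bounded measurable `g`,
`𝔼_{H₁}[g(θ, z_J)] = ∫_Z ∫_Θ g(θ,z) · 𝔼_{D'∼π^m}[p_{D'∪z}(θ)] dμ(θ) dπ(z)`. -/
theorem h1_joint_law_density
    {Θ Z : Type*} [MeasurableSpace Θ] [MeasurableSpace Z]
    (μ : Measure Θ) [SigmaFinite μ]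
    (π : Measure Z) [IsProbabilityMeasure π]
    (T : ℝ) (hT : 0 < T)
    (ℓ : Θ → Z → ℝ) (hℓ : Measurable fun p : Θ × Z => ℓ p.1 p.2)
    (hℓ0 : ∀ θ z, 0 ≤ ℓ θ z)
    (m : ℕ)
    (hwell : ∀ k : ℕ, ∀ᵐ D ∂(Measure.pi fun _ : Fin k => π),
      Integrable (fun θ => Real.exp (-(∑ i, ℓ θ (D i)) / T)) μ ∧
      0 < ∫ θ, Real.exp (-(∑ i, ℓ θ (D i)) / T) ∂μ)
    (g : Θ → Z → ℝ) (hg : Measurable fun p : Θ × Z => g p.1 p.2)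
    (hgb : ∃ C : ℝ, ∀ θ z, |g θ z| ≤ C) :
    ∫ D, (∑ j : Fin (m + 1), ∫ θ, g θ (D j) * gibbsDensity μ T ℓ D θ ∂μ)
          / (m + 1 : ℝ)
        ∂(Measure.pi fun _ : Fin (m + 1) => π)
      = ∫ z, ∫ θ, g θ z *
            (∫ D', gibbsDensity μ T ℓ (Fin.snoc D' z) θ
              ∂(Measure.pi fun _ : Fin m => π)) ∂μ ∂π :=
  h1_joint_law_density_general μ π T ℓ hℓ m hwell g hg hgb
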